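/- arXiv:2201.08988 — 7 statements merged into one kernel-verified Lean document; each statement's English description precedes it below -/
import Mathlib

section
/- Let A be an n×n integer matrix with Δ := |det(A)| > 0, let b ∈ ℤⁿ, and let P = {x ∈ ℝⁿ : A x ≤ b}. Let h₁,…,hₙ be the columns of Δ·A⁻¹, and let c ∈ ℤⁿ satisfy ⟨c, hᵢ⟩ > 0 for every i ∈ {1,…,n}. Then for every τ > 0 the family (e^{⟨c,z⟩τ})_{z ∈ P ∩ ℤⁿ} is summable (the series ∑_{z ∈ P ∩ ℤⁿ} e^{⟨c,z⟩τ} converges absolutely). -/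
open Matrix

lemma summable_pi_geom : ∀ (n : ℕ) (r : Fin n → ℝ), (∀ i, 0 ≤ r i) → (∀ i, r i < 1) →
    Summable (fun k : Fin n → ℕ => ∏ i, r i ^ k i) := by
  intro n
  induction n with
  | zero => intro r _ _; exact summable_of_finite_support (Set.toFinite _)
  | succ m ih =>
    intro r h0 h1
    have ih' : Summable (fun k : Fin m → ℕ => ∏ i, r i.succ ^ k i) := by
      have := ih (fun i => r i.succ) (fun i => h0 _) (fun i => h1 _)
      simpa using this
    have hs : Summable (fun p : ℕ × (Fin m → ℕ) =>
        (r 0 ^ p.1) * ∏ i : Fin m, r i.succ ^ p.2 i) := by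
      apply Summable.mul_of_nonneg (summable_geometric_of_lt_one (h0 0) (h1 0)) ih'
        (fun k => pow_nonneg (h0 0) _) (fun k => Finset.prod_nonneg fun i _ => pow_nonneg (h0 _) _)
    have h2 := (Fin.consEquiv (fun _ : Fin (m+1) => ℕ)).symm.summable_iff.mpr hs
    refine h2.congr fun k => ?_
    simp [Fin.consEquiv, Fin.prod_univ_succ, Fin.tail]

/-- Let `A` be an `n×n` integer matrix with `Δ := |det A| > 0`,
`b ∈ ℤⁿ`, and `P = {x ∈ ℝⁿ : A x ≤ b}`.  If `c ∈ ℤⁿ` has positive inner product with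
every column of `Δ·A⁻¹`, then for every `τ > 0` the family `(e^{⟨c,z⟩τ})_{z ∈ P ∩ ℤⁿ}`
is summable. -/
theorem summable_exp_over_lattice_points (n : ℕ) (A : Matrix (Fin n) (Fin n) ℤ)
    (hA : 0 < |A.det|) (b : Fin n → ℤ) (c : Fin n → ℤ)
    (hc : ∀ i : Fin n, 0 < ∑ j, (c j : ℝ) *
      (((|A.det| : ℝ) • (A.map (Int.cast : ℤ → ℝ))⁻¹) j i))
    (τ : ℝ) (hτ : 0 < τ) :
    Summable (fun z : {z : Fin n → ℤ // ∀ i, A.mulVec z i ≤ b i} =>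
      Real.exp ((∑ j, (c j : ℝ) * (z.1 j : ℝ)) * τ)) := by
  classical
  set A' : Matrix (Fin n) (Fin n) ℝ := A.map (Int.cast : ℤ → ℝ) with hA'
  have hAne : A.det ≠ 0 := by intro h; simp [h] at hA
  have hdetc : A'.det = ((A.det : ℤ) : ℝ) := by
    rw [hA']
    exact ((RingHom.map_det (Int.castRingHom ℝ) A).symm).trans (by norm_cast)
  have hdet : IsUnit A'.det := by
    rw [hdetc, isUnit_iff_ne_zero]
    exact_mod_cast hAne
  have hΔ : (0:ℝ) < (|A.det| : ℝ) := by exact_mod_cast hA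
  set d : Fin n → ℝ := fun i => (∑ j, (c j : ℝ) * A'⁻¹ j i) * τ with hd
  -- reconstruction of z from A z
  have hrec : ∀ (z : Fin n → ℤ) (j : Fin n),
      (z j : ℝ) = ∑ i, A'⁻¹ j i * ((A.mulVec z) i : ℝ) := by
    intro z j
    have hw : A'.mulVec (fun j => (z j : ℝ)) = fun i => ((A.mulVec z) i : ℝ) := by
      ext i
      simp only [hA', Matrix.mulVec, dotProduct, Matrix.map_apply]
      push_cast
      rfl
    have hz : A'⁻¹.mulVec (A'.mulVec (fun j => (z j : ℝ))) = fun j => (z j : ℝ) := by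
      rw [Matrix.mulVec_mulVec, Matrix.nonsing_inv_mul _ hdet, Matrix.one_mulVec]
    rw [hw] at hz
    have := congrFun hz j
    rw [← this]
    simp [Matrix.mulVec, dotProduct]
  -- positivity of d
  have hdpos : ∀ i, 0 < d i := by
    intro i
    have he : (∑ j, (c j : ℝ) * (((|A.det| : ℝ) • A'⁻¹) j i))
        = (|A.det| : ℝ) * ∑ j, (c j : ℝ) * A'⁻¹ j i := by
      rw [Finset.mul_sum]
      refine Finset.sum_congr rfl fun j _ => ?_
      simp [Matrix.smul_apply, smul_eq_mul]; ring
    have h2 := hc i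
    rw [he] at h2
    have hsum : 0 < ∑ j, (c j : ℝ) * A'⁻¹ j i := by nlinarith [h2, hΔ]
    simpa [hd] using mul_pos hsum hτ
  -- key identity
  have key : ∀ z : Fin n → ℤ,
      (∑ j, (c j : ℝ) * (z j : ℝ)) * τ = ∑ i, d i * ((A.mulVec z) i : ℝ) := by
    intro z
    have : (∑ j, (c j : ℝ) * (z j : ℝ))
        = ∑ i, (∑ j, (c j : ℝ) * A'⁻¹ j i) * ((A.mulVec z) i : ℝ) := by
      calc ∑ j, (c j : ℝ) * (z j : ℝ)
          = ∑ j, ∑ i, (c j : ℝ) * (A'⁻¹ j i * ((A.mulVec z) i : ℝ)) := by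
            refine Finset.sum_congr rfl fun j _ => ?_
            rw [hrec z j, Finset.mul_sum]
        _ = ∑ i, (∑ j, (c j : ℝ) * A'⁻¹ j i) * ((A.mulVec z) i : ℝ) := by
            rw [Finset.sum_comm]
            refine Finset.sum_congr rfl fun i _ => ?_
            rw [Finset.sum_mul]
            refine Finset.sum_congr rfl fun j _ => by ring
    rw [this, Finset.sum_mul]
    exact Finset.sum_congr rfl fun i _ => by rw [hd]; ring
  -- the injection
  set φ : {z : Fin n → ℤ // ∀ i, A.mulVec z i ≤ b i} → (Fin n → ℕ) :=
    fun z i => (b i - A.mulVec z.1 i).toNat with hφ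
  have hφval : ∀ z (i : Fin n), ((φ z i : ℤ)) = b i - A.mulVec z.1 i :=
    fun z i => Int.toNat_of_nonneg (by linarith [z.2 i])
  have hinj : Function.Injective φ := by
    intro z w h
    have hAz : A.mulVec z.1 = A.mulVec w.1 := by
      funext i
      have h0 : ((φ z i : ℤ)) = ((φ w i : ℤ)) := by exact_mod_cast congrFun h i
      have h1 := hφval z i
      have h2 := hφval w i
      omega
    apply Subtype.ext
    funext j
    have : ((z.1 j : ℝ)) = ((w.1 j : ℝ)) := by
      rw [hrec z.1 j, hrec w.1 j, hAz]
    exact_mod_cast this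
  -- geometric comparison
  set r : Fin n → ℝ := fun i => Real.exp (-(d i)) with hr
  have hr0 : ∀ i, 0 ≤ r i := fun i => (Real.exp_pos _).le
  have hr1 : ∀ i, r i < 1 := fun i => Real.exp_lt_one_iff.mpr (by linarith [hdpos i])
  have hg : Summable (fun k : Fin n → ℕ =>
      (∏ i, Real.exp (d i * (b i : ℝ))) * ∏ i, r i ^ k i) :=
    (summable_pi_geom n r hr0 hr1).mul_left _
  have hcomp := hg.comp_injective hinj
  refine hcomp.congr fun z => ?_
  show (∏ i, Real.exp (d i * (b i : ℝ))) * ∏ i, r i ^ (φ z i)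
      = Real.exp ((∑ j, (c j : ℝ) * (z.1 j : ℝ)) * τ)
  rw [key z.1, Real.exp_sum, ← Finset.prod_mul_distrib]
  refine Finset.prod_congr rfl fun i _ => ?_
  rw [hr, ← Real.exp_nat_mul, ← Real.exp_add]
  congr 1
  have hk : ((φ z i : ℝ)) = (b i : ℝ) - ((A.mulVec z.1 i : ℤ) : ℝ) := by
    exact_mod_cast congrArg (fun t : ℤ => (t : ℝ)) (hφval z i)
  rw [hk]
  ring
end

section
/- Let A be an n×n integer matrix with Δ := |det(A)| > 0, let b ∈ ℤⁿ, let P = {x ∈ ℝⁿ : A x ≤ b}, let h₁,…,hₙ be the columns of Δ·A⁻¹, and let c ∈ ℤⁿ satisfy ⟨c, hᵢ⟩ > 0 for every i. Let M = {y ∈ ℤⁿ : y ≥ 0 and b − y ∈ Aℤⁿ}. Then for every τ > 0, ∑_{z ∈ P ∩ ℤⁿ} e^{⟨c,z⟩τ} = e^{⟨c, A⁻¹b⟩ τ} · ∑_{y ∈ M} e^{−⟨c, A⁻¹ y⟩ τ}, where both series converge absolutely. -/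
/-!
The map `z ↦ b - A z` is a bijection from `P ∩ ℤⁿ` onto `M`, and since `A⁻¹ (b - A z) = A⁻¹ b - z`
it turns `⟨c, z⟩` into `⟨c, A⁻¹ b⟩ - ⟨c, A⁻¹ y⟩`; so the two series agree term by term after
pulling out the constant factor. Moreover `⟨c, A⁻¹ y⟩ = Δ⁻¹ ∑ᵢ yᵢ ⟨c, hᵢ⟩` has positive
coefficients, so on `y ≥ 0` the series over `M` is dominated by a product of `n` convergent
geometric series.
-/

open Matrix Finset

theorem summable_pi_prod_of_nonneg {ι : Type*} [Fintype ι] {κ : ι → Type*} {f : ∀ i, κ i → ℝ}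
    (hf₀ : ∀ i k, 0 ≤ f i k) (hf : ∀ i, Summable (f i)) :
    Summable fun y : ∀ i, κ i => ∏ i, f i (y i) := by
  classical
  have hprod₀ : ∀ y : ∀ i, κ i, 0 ≤ ∏ i, f i (y i) := fun y => prod_nonneg fun i _ => hf₀ i (y i)
  refine summable_of_sum_le (c := ∏ i, ∑' k, f i k) hprod₀ fun s => ?_
  calc ∑ y ∈ s, ∏ i, f i (y i)
      ≤ ∑ y ∈ Fintype.piFinset fun i => s.image (· i), ∏ i, f i (y i) :=
        sum_le_sum_of_subset_of_nonneg
          (fun y hy => Fintype.mem_piFinset.2 fun i => mem_image_of_mem _ hy)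
          fun y _ _ => hprod₀ y
    _ = ∏ i, ∑ k ∈ s.image (· i), f i k := (prod_univ_sum _ _).symm
    _ ≤ ∏ i, ∑' k, f i k :=
        prod_le_prod (fun i _ => sum_nonneg fun k _ => hf₀ i k)
          fun i _ => (hf i).sum_le_tsum _ fun k _ => hf₀ i k

namespace Matrix

variable {ι : Type*} [Fintype ι]

theorem summable_exp_neg_dotProduct_natCast {d : ι → ℝ} (hd : ∀ i, 0 < d i) :
    Summable fun y : ι → ℕ => Real.exp (-(d ⬝ᵥ fun i => (y i : ℝ))) := by
  refine (summable_pi_prod_of_nonneg (f := fun i (k : ℕ) => Real.exp (k * -d i))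
    (fun _ _ => (Real.exp_pos _).le)
    fun i => Real.summable_exp_nat_mul_iff.2 (neg_lt_zero.2 (hd i))).congr fun y => ?_
  rw [← Real.exp_sum, dotProduct, ← sum_neg_distrib]
  congr 1
  exact sum_congr rfl fun i _ => by ring

theorem summable_exp_neg_dotProduct_intCast {d : ι → ℝ} (hd : ∀ i, 0 < d i)
    {p : (ι → ℤ) → Prop} (hp : ∀ y, p y → ∀ i, 0 ≤ y i) :
    Summable fun y : Subtype p => Real.exp (-(d ⬝ᵥ fun i => (y.1 i : ℝ))) := by
  have hinj : Function.Injective fun (y : Subtype p) i => (y.1 i).toNat := fun y y' h =>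
    Subtype.ext <| funext fun i => by
      have := congrFun h i
      simp only at this
      have := hp _ y.2 i
      have := hp _ y'.2 i
      omega
  refine ((summable_exp_neg_dotProduct_natCast hd).comp_injective hinj).congr fun y => ?_
  have hcast : ∀ i, (((y.1 i).toNat : ℕ) : ℝ) = (y.1 i : ℝ) := fun i => by
    exact_mod_cast Int.toNat_of_nonneg (hp _ y.2 i)
  simp only [Function.comp_apply, hcast]

section Slack

variable {R m : Type*} [Ring R] [PartialOrder R] [IsOrderedAddMonoid R]

noncomputable def slackEquiv (A : Matrix m ι R) (hA : Function.Injective A.mulVec) (b : m → R) :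
    {z : ι → R // ∀ i, (A *ᵥ z) i ≤ b i} ≃ {y : m → R // (∀ i, 0 ≤ y i) ∧ ∃ z, b - y = A *ᵥ z} :=
  Equiv.ofBijective (fun z => ⟨b - A *ᵥ z, fun i => sub_nonneg.2 (z.2 i), z, sub_sub_cancel _ _⟩)
    ⟨fun z z' h => Subtype.ext (hA (sub_right_injective (congrArg Subtype.val h))),
      fun ⟨y, hy, z, hz⟩ => ⟨⟨z, fun i => by simpa [← hz] using hy i⟩,
        Subtype.ext (by simp [← hz])⟩⟩

theorem slackEquiv_apply_coe (A : Matrix m ι R) (hA : Function.Injective A.mulVec) (b : m → R)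
    (z : {z : ι → R // ∀ i, (A *ᵥ z) i ≤ b i}) :
    (slackEquiv A hA b z : m → R) = b - A *ᵥ z :=
  rfl

end Slack

section IntCast

variable {K : Type*} [Field K] [CharZero K] [DecidableEq ι]

theorem inv_map_intCast_mulVec {A : Matrix ι ι ℤ} (hA : A.det ≠ 0) (z : ι → ℤ) :
    (A.map (Int.cast : ℤ → K))⁻¹ *ᵥ (fun i => ((A *ᵥ z) i : K)) = fun i => (z i : K) := by
  have hunit : IsUnit (A.map (Int.cast : ℤ → K)).det := by
    rw [← Int.cast_det]
    exact (Int.cast_ne_zero.2 hA).isUnit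
  have hcast : (fun i => ((A *ᵥ z) i : K)) = A.map (Int.cast : ℤ → K) *ᵥ fun i => (z i : K) :=
    funext fun i => (Int.castRingHom K).map_mulVec A z i
  rw [hcast, mulVec_mulVec, nonsing_inv_mul _ hunit, one_mulVec]

theorem inv_map_intCast_mulVec_sub {A : Matrix ι ι ℤ} (hA : A.det ≠ 0) (b z : ι → ℤ) :
    (A.map (Int.cast : ℤ → K))⁻¹ *ᵥ (fun i => ((b - A *ᵥ z) i : K)) =
      (A.map (Int.cast : ℤ → K))⁻¹ *ᵥ (fun i => (b i : K)) - fun i => (z i : K) := by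
  rw [← inv_map_intCast_mulVec hA z, ← mulVec_sub]
  congr 1
  ext i
  simp only [Pi.sub_apply, Int.cast_sub]

end IntCast

end Matrix

/-- With `A`, `b`, `P`, `c` as in Statement 1 and
`M = {y ∈ ℤⁿ : y ≥ 0, b − y ∈ Aℤⁿ}`, for every `τ > 0` we have
`∑_{z ∈ P ∩ ℤⁿ} e^{⟨c,z⟩τ} = e^{⟨c,A⁻¹b⟩τ} · ∑_{y ∈ M} e^{−⟨c,A⁻¹y⟩τ}`,
both series converging absolutely. -/
theorem tsum_lattice_points_eq_group_series (n : ℕ) (A : Matrix (Fin n) (Fin n) ℤ)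
    (hA : 0 < |A.det|) (b : Fin n → ℤ) (c : Fin n → ℤ)
    (hc : ∀ i : Fin n, 0 < ∑ j, (c j : ℝ) *
      (((|A.det| : ℝ) • (A.map (Int.cast : ℤ → ℝ))⁻¹) j i))
    (τ : ℝ) (hτ : 0 < τ) :
    Summable (fun z : {z : Fin n → ℤ // ∀ i, A.mulVec z i ≤ b i} =>
      Real.exp ((∑ j, (c j : ℝ) * (z.1 j : ℝ)) * τ)) ∧
    Summable (fun y : {y : Fin n → ℤ //
        (∀ i, 0 ≤ y i) ∧ ∃ z : Fin n → ℤ, b - y = A.mulVec z} =>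
      Real.exp (-(∑ j, (c j : ℝ) *
        (A.map (Int.cast : ℤ → ℝ))⁻¹.mulVec (fun i => (y.1 i : ℝ)) j) * τ)) ∧
    (∑' z : {z : Fin n → ℤ // ∀ i, A.mulVec z i ≤ b i},
        Real.exp ((∑ j, (c j : ℝ) * (z.1 j : ℝ)) * τ)) =
      Real.exp ((∑ j, (c j : ℝ) *
          (A.map (Int.cast : ℤ → ℝ))⁻¹.mulVec (fun i => (b i : ℝ)) j) * τ) *
      ∑' y : {y : Fin n → ℤ //
          (∀ i, 0 ≤ y i) ∧ ∃ z : Fin n → ℤ, b - y = A.mulVec z},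
        Real.exp (-(∑ j, (c j : ℝ) *
          (A.map (Int.cast : ℤ → ℝ))⁻¹.mulVec (fun i => (y.1 i : ℝ)) j) * τ) := by
  set B := (A.map (Int.cast : ℤ → ℝ))⁻¹ with hB
  let c' : Fin n → ℝ := fun j => c j
  have hdet : A.det ≠ 0 := abs_pos.mp hA
  let f : {y : Fin n → ℤ // (∀ i, 0 ≤ y i) ∧ ∃ z, b - y = A.mulVec z} → ℝ :=
    fun y => Real.exp (-(c' ⬝ᵥ B *ᵥ fun i => (y.1 i : ℝ)) * τ)
  let e := slackEquiv A (mulVec_injective_of_det_ne_zero hdet) b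
  have hexp : ∀ z, Real.exp ((c' ⬝ᵥ fun i => (z.1 i : ℝ)) * τ) =
      Real.exp ((c' ⬝ᵥ B *ᵥ fun i => (b i : ℝ)) * τ) * f (e z) := fun z => by
    rw [← Real.exp_add, slackEquiv_apply_coe, hB, inv_map_intCast_mulVec_sub hdet, dotProduct_sub]
    ring_nf
  have hweight : ∀ i, 0 < (τ • (c' ᵥ* B)) i := fun i => by
    have hΔ : (0 : ℝ) < |(A.det : ℝ)| := abs_pos.2 (Int.cast_ne_zero.2 hdet)
    have := hc i
    change 0 < (c' ᵥ* ((|A.det| : ℝ) • B)) i at this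
    rw [vecMul_smul, Pi.smul_apply, smul_eq_mul] at this
    exact mul_pos hτ (pos_of_mul_pos_right this hΔ.le)
  have hM : Summable f :=
    (summable_exp_neg_dotProduct_intCast hweight fun y hy => hy.1).congr fun y => by
      rw [show f y = Real.exp (-(c' ⬝ᵥ B *ᵥ fun i => (y.1 i : ℝ)) * τ) from rfl, neg_mul,
        smul_dotProduct, dotProduct_mulVec, smul_eq_mul, mul_comm]
  refine ⟨((e.summable_iff.2 hM).mul_left _).congr fun z => (hexp z).symm, hM, ?_⟩
  calc ∑' z : {z : Fin n → ℤ // ∀ i, A.mulVec z i ≤ b i},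
        Real.exp ((c' ⬝ᵥ fun i => (z.1 i : ℝ)) * τ)
      = ∑' z, Real.exp ((c' ⬝ᵥ B *ᵥ fun i => (b i : ℝ)) * τ) * f (e z) := tsum_congr hexp
    _ = Real.exp ((c' ⬝ᵥ B *ᵥ fun i => (b i : ℝ)) * τ) * ∑' y, f y := by
      rw [tsum_mul_left, e.tsum_eq f]
end

section
/- Let A be an n×n real matrix with det(A) ≠ 0, let ‖·‖ be a norm on ℝⁿ that is invariant under changing the sign of any single coordinate (i.e. ‖x‖ = ‖x − 2xᵢeᵢ‖ for all x and all i), let B = {x ∈ ℝⁿ : ‖x‖ ≤ 1} be its closed unit ball, and let r > 0 be such that r·B ⊆ {x ∈ ℝⁿ : ‖A x‖ ≤ 1}. Then vol(B ∩ cone(A)) ≥ (|det(A)| / 2ⁿ) · rⁿ · vol(B), where cone(A) = {A y : y ∈ ℝⁿ, y ≥ 0} is the conic hull of the columns of A and vol denotes n-dimensional Lebesgue measure. -/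
open Matrix MeasureTheory
open scoped Pointwise ENNReal

/-- The conic hull `cone(A) = {A y : y ≥ 0}` of the columns of a square matrix `A`. -/
def matrixCone (n : ℕ) (A : Matrix (Fin n) (Fin n) ℝ) : Set (Fin n → ℝ) :=
  {v | ∃ y : Fin n → ℝ, (∀ i, 0 ≤ y i) ∧ v = A.mulVec y}

lemma flip_nrm (n : ℕ) (nrm : (Fin n → ℝ) → ℝ)
    (h_sym : ∀ (x : Fin n → ℝ) (i : Fin n), nrm (Function.update x i (-(x i))) = nrm x)
    (s : Finset (Fin n)) (x : Fin n → ℝ) :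
    nrm (fun j => if j ∈ s then -x j else x j) = nrm x := by
  induction s using Finset.induction_on with
  | empty => simp
  | @insert i s' his ih =>
    
    have key : (fun j => if j ∈ insert i s' then -x j else x j)
        = Function.update (fun j => if j ∈ s' then -x j else x j) i
            (-((fun j => if j ∈ s' then -x j else x j) i)) := by
      funext j
      by_cases hj : j = i
      · subst hj
        simp [Function.update_self, his]
      · simp [Function.update_of_ne hj, Finset.mem_insert, hj]
    rw [key, h_sym, ih]

/-- Let `A` be a nonsingular `n×n` real matrix, `‖·‖` a norm on `ℝⁿ`
invariant under flipping the sign of any single coordinate, `B` its closed unit ball,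
and `r > 0` with `r·B ⊆ {x : ‖Ax‖ ≤ 1}`.  Then
`vol(B ∩ cone(A)) ≥ (|det A| / 2ⁿ) · rⁿ · vol(B)`. -/
theorem volume_unitBall_inter_cone_ge (n : ℕ) (A : Matrix (Fin n) (Fin n) ℝ)
    (hA : A.det ≠ 0) (nrm : (Fin n → ℝ) → ℝ)
    (h_add : ∀ x y, nrm (x + y) ≤ nrm x + nrm y)
    (h_smul : ∀ (a : ℝ) (x : Fin n → ℝ), nrm (a • x) = |a| * nrm x)
    (h_def : ∀ x, nrm x = 0 → x = 0)
    (h_sym : ∀ (x : Fin n → ℝ) (i : Fin n), nrm (Function.update x i (-(x i))) = nrm x)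
    (r : ℝ) (hr : 0 < r)
    (hrB : r • {x : Fin n → ℝ | nrm x ≤ 1} ⊆ {x : Fin n → ℝ | nrm (A.mulVec x) ≤ 1}) :
    ENNReal.ofReal (|A.det| / 2 ^ n * r ^ n) * volume {x : Fin n → ℝ | nrm x ≤ 1}
      ≤ volume ({x : Fin n → ℝ | nrm x ≤ 1} ∩ matrixCone n A) := by
  set B : Set (Fin n → ℝ) := {x | nrm x ≤ 1} with hB
  set Q : Set (Fin n → ℝ) := {x | ∀ i, 0 ≤ x i} with hQ
  -- sign-flip linear maps
  set g : Finset (Fin n) → ((Fin n → ℝ) →ₗ[ℝ] (Fin n → ℝ)) :=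
    fun s => Matrix.toLin' (Matrix.diagonal fun j => if j ∈ s then (-1 : ℝ) else 1) with hg
  have hgapp : ∀ (s : Finset (Fin n)) (x : Fin n → ℝ) (j : Fin n),
      g s x j = (if j ∈ s then (-1 : ℝ) else 1) * x j := by
    intro s x j
    simp [hg, Matrix.toLin'_apply, Matrix.mulVec_diagonal]
  have hgdet : ∀ s : Finset (Fin n), |LinearMap.det (g s)| = 1 := by
    intro s
    rw [hg, LinearMap.det_toLin', Matrix.det_diagonal, Finset.abs_prod]
    apply Finset.prod_eq_one
    intro j _
    by_cases hj : j ∈ s <;> simp [hj]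
  -- covering
  have cover : B ⊆ ⋃ s : Finset (Fin n), g s '' (B ∩ Q) := by
    intro x hx
    set s : Finset (Fin n) := Finset.univ.filter (fun i => x i < 0) with hs
    have hmem : ∀ j, j ∈ s ↔ x j < 0 := by
      intro j; simp [hs]
    set y : Fin n → ℝ := fun j => if j ∈ s then -x j else x j with hy
    refine Set.mem_iUnion.2 ⟨s, y, ⟨?_, ?_⟩, ?_⟩
    · show nrm y ≤ 1
      rw [hy, flip_nrm n nrm h_sym]
      exact hx
    · intro i
      rw [hy]
      by_cases hi : i ∈ s
      · simp only [hi, if_true]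
        linarith [(hmem i).1 hi]
      · simp only [hi, if_false]
        exact not_lt.1 (fun h => hi ((hmem i).2 h))
    · funext j
      rw [hgapp]
      by_cases hj : j ∈ s
      · simp [hy, hj]
      · simp [hy, hj]
  have step1 : volume B ≤ (2 : ℝ≥0∞) ^ n * volume (B ∩ Q) := by
    calc volume B ≤ volume (⋃ s : Finset (Fin n), g s '' (B ∩ Q)) := measure_mono cover
      _ ≤ ∑ s : Finset (Fin n), volume (g s '' (B ∩ Q)) := measure_iUnion_fintype_le _ _
      _ = ∑ s : Finset (Fin n), volume (B ∩ Q) := by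
          apply Finset.sum_congr rfl
          intro s _
          rw [Measure.addHaar_image_linearMap, hgdet, ENNReal.ofReal_one, one_mul]
      _ = (2 : ℝ≥0∞) ^ n * volume (B ∩ Q) := by
          rw [Finset.sum_const, Finset.card_univ, Fintype.card_finset, Fintype.card_fin,
            nsmul_eq_mul]
          norm_num
  -- image inclusion
  have incl : (Matrix.toLin' A) '' (r • (B ∩ Q)) ⊆ B ∩ matrixCone n A := by
    rintro _ ⟨_, ⟨x, ⟨hxB, hxQ⟩, rfl⟩, rfl⟩
    constructor
    · show nrm (Matrix.toLin' A (r • x)) ≤ 1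
      rw [Matrix.toLin'_apply]
      exact hrB ⟨x, hxB, rfl⟩
    · exact ⟨r • x, fun i => mul_nonneg hr.le (hxQ i), (Matrix.toLin'_apply A _).symm⟩
  have step2 : ENNReal.ofReal |A.det| * (ENNReal.ofReal (r ^ n) * volume (B ∩ Q))
      ≤ volume (B ∩ matrixCone n A) := by
    calc ENNReal.ofReal |A.det| * (ENNReal.ofReal (r ^ n) * volume (B ∩ Q))
        = volume ((Matrix.toLin' A) '' (r • (B ∩ Q))) := by
          rw [Measure.addHaar_image_linearMap, LinearMap.det_toLin',
            Measure.addHaar_smul, Module.finrank_fin_fun, abs_pow, abs_of_pos hr]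
      _ ≤ volume (B ∩ matrixCone n A) := measure_mono incl
  -- final algebra
  have h2n : (0:ℝ) < 2 ^ n := by positivity
  calc ENNReal.ofReal (|A.det| / 2 ^ n * r ^ n) * volume B
      ≤ ENNReal.ofReal (|A.det| / 2 ^ n * r ^ n) * ((2 : ℝ≥0∞) ^ n * volume (B ∩ Q)) :=
        mul_le_mul_right step1 _
    _ = ENNReal.ofReal |A.det| * (ENNReal.ofReal (r ^ n) * volume (B ∩ Q)) := by
        rw [← mul_assoc, ← mul_assoc]
        congr 1
        have : (2 : ℝ≥0∞) ^ n = ENNReal.ofReal (2 ^ n) := by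
          rw [ENNReal.ofReal_pow (by norm_num)]
          norm_num
        rw [this, ← ENNReal.ofReal_mul (by positivity), ← ENNReal.ofReal_mul (abs_nonneg _)]
        congr 1
        field_simp
    _ ≤ volume (B ∩ matrixCone n A) := step2
end

section
/- Let A be an n×n real matrix with det(A) ≠ 0, and let B₁ = {x ∈ ℝⁿ : ‖x‖₁ ≤ 1} be the closed unit ℓ₁-ball. Then vol(B₁ ∩ cone(A)) ≥ (|det(A)| / (2‖A‖_∞)ⁿ) · vol(B₁) ≥ (|det(A)| / (2‖A‖_max·c(A))ⁿ) · vol(B₁), where ‖A‖_∞ := max_j ∑_i |A_{ij}| is the maximum ℓ₁-norm of a column of A, ‖A‖_max = max_{i,j} |A_{ij}|, and c(A) is the maximum number of nonzero entries in a column of A. -/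
open Matrix MeasureTheory
open scoped Classical

/-!
The unit `ℓ₁`-ball is the union of the `2ⁿ` reflections of the solid simplex
`Δ = {y ≥ 0, ∑ y ≤ 1}` through the coordinate hyperplanes, so `vol B₁ ≤ 2ⁿ vol Δ`. Writing
`M = ‖A‖_∞`, the matrix `M⁻¹ A` maps `Δ` into `B₁ ∩ cone(A)`, because `‖A y‖₁ ≤ M ‖y‖₁`; hence
`vol (B₁ ∩ cone(A)) ≥ |det A| M⁻ⁿ vol Δ ≥ |det A| (2M)⁻ⁿ vol B₁`. The second inequality is
`‖A‖_∞ ≤ ‖A‖_max c(A)`, as each column has at most `c(A)` nonzero entries.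
-/

open Finset

def solidSimplex (ι : Type*) [Fintype ι] : Set (ι → ℝ) :=
  {y | (∀ i, 0 ≤ y i) ∧ ∑ i, y i ≤ 1}

section

variable {ι : Type*} [Fintype ι]

theorem Matrix.volume_image_mulVec [DecidableEq ι] (A : Matrix ι ι ℝ) (s : Set (ι → ℝ)) :
    volume (A.mulVec '' s) = ENNReal.ofReal |A.det| * volume s := by
  have h := Measure.addHaar_image_linearMap volume A.mulVecLin s
  rwa [← Matrix.toLin'_apply', LinearMap.det_toLin'] at h

noncomputable def signDiagonal [DecidableEq ι] (ε : ι → Bool) : Matrix ι ι ℝ :=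
  diagonal fun i => if ε i then 1 else -1

theorem abs_det_signDiagonal [DecidableEq ι] (ε : ι → Bool) : |(signDiagonal ε).det| = 1 := by
  rw [signDiagonal, det_diagonal, abs_prod]
  exact prod_eq_one fun i _ => by cases ε i <;> simp

theorem l1Ball_subset_iUnion_signDiagonal_image [DecidableEq ι] :
    {x : ι → ℝ | ∑ i, |x i| ≤ 1} ⊆
      ⋃ ε : ι → Bool, (signDiagonal ε).mulVec '' solidSimplex ι := by
  intro x hx
  refine Set.mem_iUnion.2
    ⟨fun i => decide (0 ≤ x i), fun i => |x i|, ⟨fun i => abs_nonneg _, hx⟩, ?_⟩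
  funext i
  rw [signDiagonal, mulVec_diagonal]
  by_cases h : 0 ≤ x i
  · simp [h, abs_of_nonneg h]
  · simp [h, abs_of_neg (not_le.1 h)]

theorem volume_l1Ball_le [DecidableEq ι] :
    volume {x : ι → ℝ | ∑ i, |x i| ≤ 1} ≤ 2 ^ Fintype.card ι * volume (solidSimplex ι) :=
  calc volume {x : ι → ℝ | ∑ i, |x i| ≤ 1}
      ≤ ∑' ε : ι → Bool, volume ((signDiagonal ε).mulVec '' solidSimplex ι) :=
        (measure_mono l1Ball_subset_iUnion_signDiagonal_image).trans (measure_iUnion_le _)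
    _ = 2 ^ Fintype.card ι * volume (solidSimplex ι) := by
        simp [Matrix.volume_image_mulVec, abs_det_signDiagonal]

theorem colL1_nonneg (A : Matrix ι ι ℝ) : 0 ≤ ⨆ j, ∑ i, |A i j| :=
  Real.iSup_nonneg fun _ => sum_nonneg fun _ _ => abs_nonneg _

theorem sum_abs_mulVec_le (A : Matrix ι ι ℝ) (y : ι → ℝ) :
    ∑ i, |A.mulVec y i| ≤ (⨆ j, ∑ i, |A i j|) * ∑ j, |y j| :=
  calc ∑ i, |A.mulVec y i| ≤ ∑ i, ∑ j, |A i j| * |y j| :=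
        sum_le_sum fun i _ => (abs_sum_le_sum_abs _ _).trans_eq (by simp only [abs_mul])
    _ = ∑ j, (∑ i, |A i j|) * |y j| := by rw [sum_comm]; simp only [sum_mul]
    _ ≤ ∑ j, (⨆ j, ∑ i, |A i j|) * |y j| :=
        sum_le_sum fun j _ => mul_le_mul_of_nonneg_right
          (le_ciSup (f := fun j => ∑ i, |A i j|) (Set.finite_range _).bddAbove j) (abs_nonneg _)
    _ = (⨆ j, ∑ i, |A i j|) * ∑ j, |y j| := (mul_sum _ _ _).symm

theorem colL1_le_maxAbs_mul_maxCard (A : Matrix ι ι ℝ) :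
    (⨆ j, ∑ i, |A i j|) ≤
      (⨆ i, ⨆ j, |A i j|) * ((⨆ j, (univ.filter fun i => A i j ≠ 0).card : ℕ) : ℝ) := by
  have hentry : ∀ i j, |A i j| ≤ ⨆ i, ⨆ j, |A i j| := fun i j =>
    (le_ciSup (f := fun j => |A i j|) (Set.finite_range _).bddAbove j).trans
      (le_ciSup (f := fun i => ⨆ j, |A i j|) (Set.finite_range _).bddAbove i)
  have hmax_nonneg : 0 ≤ ⨆ i, ⨆ j, |A i j| :=
    Real.iSup_nonneg fun i => Real.iSup_nonneg fun j => abs_nonneg (A i j)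
  refine Real.iSup_le (fun j => ?_) (by positivity)
  calc ∑ i, |A i j| = ∑ i ∈ univ.filter fun i => A i j ≠ 0, |A i j| :=
        (sum_filter_of_ne fun i _ h => by simpa using h).symm
    _ ≤ (univ.filter fun i => A i j ≠ 0).card • ⨆ i, ⨆ j, |A i j| :=
        sum_le_card_nsmul _ _ _ fun i _ => hentry i j
    _ ≤ _ := by
        rw [nsmul_eq_mul, mul_comm]
        refine mul_le_mul_of_nonneg_left ?_ hmax_nonneg
        exact_mod_cast le_ciSup (f := fun j => (univ.filter fun i => A i j ≠ 0).card)
          (Set.finite_range _).bddAbove j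

theorem colL1_pow_pos_of_det_ne_zero [DecidableEq ι] {A : Matrix ι ι ℝ} (hA : A.det ≠ 0) :
    0 < (⨆ j, ∑ i, |A i j|) ^ Fintype.card ι := by
  rcases isEmpty_or_nonempty ι with _ | hι
  · simp
  refine pow_pos ((colL1_nonneg A).lt_of_ne fun hM => hA ?_) _
  suffices A = 0 by rw [this, det_zero]
  ext i j
  have hcol : ∑ i, |A i j| ≤ 0 :=
    hM ▸ le_ciSup (f := fun j => ∑ i, |A i j|) (Set.finite_range _).bddAbove j
  simpa using (single_le_sum (fun i _ => abs_nonneg (A i j)) (mem_univ i)).trans hcol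

end

-- No positivity is needed: if `‖A‖_∞ = 0` then `‖A‖_∞⁻¹ = 0` and the image is `{0}`.
theorem smul_mulVec_image_solidSimplex_subset {n : ℕ} (A : Matrix (Fin n) (Fin n) ℝ) :
    ((⨆ j, ∑ i, |A i j|)⁻¹ • A).mulVec '' solidSimplex (Fin n) ⊆
      {x | ∑ i, |x i| ≤ 1} ∩ matrixCone n A := by
  rintro _ ⟨y, ⟨hy_nonneg, hy_sum⟩, rfl⟩
  set M := ⨆ j, ∑ i, |A i j|
  have hM : 0 ≤ M := colL1_nonneg A
  rw [smul_mulVec]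
  refine ⟨?_, M⁻¹ • y, fun i => mul_nonneg (inv_nonneg.2 hM) (hy_nonneg i), by rw [mulVec_smul]⟩
  calc ∑ i, |(M⁻¹ • A.mulVec y) i| = M⁻¹ * ∑ i, |A.mulVec y i| := by
        simp only [Pi.smul_apply, smul_eq_mul, abs_mul, abs_of_nonneg (inv_nonneg.2 hM), mul_sum]
    _ ≤ M⁻¹ * (M * ∑ j, |y j|) :=
        mul_le_mul_of_nonneg_left (sum_abs_mulVec_le A y) (inv_nonneg.2 hM)
    _ = M⁻¹ * M * ∑ j, y j := by
        rw [← mul_assoc, sum_congr rfl fun j _ => abs_of_nonneg (hy_nonneg j)]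
    _ ≤ 1 :=
        mul_le_one₀ (inv_mul_le_one_of_le₀ le_rfl hM) (sum_nonneg fun j _ => hy_nonneg j) hy_sum

theorem volume_l1Ball_mul_le_volume_l1Ball_inter_cone {n : ℕ} (A : Matrix (Fin n) (Fin n) ℝ) :
    ENNReal.ofReal (|A.det| / (2 * ⨆ j, ∑ i, |A i j|) ^ n) *
        volume {x : Fin n → ℝ | ∑ i, |x i| ≤ 1}
      ≤ volume ({x : Fin n → ℝ | ∑ i, |x i| ≤ 1} ∩ matrixCone n A) := by
  set M := ⨆ j, ∑ i, |A i j|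
  have hM : 0 ≤ M := colL1_nonneg A
  have hscale : |A.det| / (2 * M) ^ n * 2 ^ n = |(M⁻¹ • A).det| := by
    rw [det_smul, Fintype.card_fin, abs_mul, abs_pow, abs_inv, abs_of_nonneg hM]
    linear_combination (M⁻¹ ^ n * |A.det|) * inv_mul_cancel₀ (pow_ne_zero n (two_ne_zero' ℝ))
  calc ENNReal.ofReal (|A.det| / (2 * M) ^ n) * volume {x : Fin n → ℝ | ∑ i, |x i| ≤ 1}
      ≤ ENNReal.ofReal (|A.det| / (2 * M) ^ n) * (2 ^ n * volume (solidSimplex (Fin n))) := by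
        simpa using mul_le_mul_right (volume_l1Ball_le (ι := Fin n)) _
    _ = ENNReal.ofReal |(M⁻¹ • A).det| * volume (solidSimplex (Fin n)) := by
        rw [← hscale, ENNReal.ofReal_mul (by positivity [hM]), ← mul_assoc,
          ENNReal.ofReal_pow zero_le_two, ENNReal.ofReal_ofNat]
    _ = volume ((M⁻¹ • A).mulVec '' solidSimplex (Fin n)) := (Matrix.volume_image_mulVec _ _).symm
    _ ≤ _ := measure_mono (smul_mulVec_image_solidSimplex_subset A)

/-- For a nonsingular `n×n` real matrix `A` and the closed unit
`ℓ₁`-ball `B₁`, one has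
`vol(B₁ ∩ cone(A)) ≥ (|det A| / (2‖A‖_∞)ⁿ)·vol(B₁) ≥ (|det A| / (2‖A‖_max·c(A))ⁿ)·vol(B₁)`,
where `‖A‖_∞` is the maximum column `ℓ₁`-norm, `‖A‖_max` the maximum absolute value of an
entry, and `c(A)` the maximum number of nonzero entries in a column. -/
theorem volume_l1Ball_inter_cone_ge (n : ℕ) (A : Matrix (Fin n) (Fin n) ℝ)
    (hA : A.det ≠ 0) :
    ENNReal.ofReal (|A.det| / (2 * ⨆ j : Fin n, ∑ i, |A i j|) ^ n) *
        volume {x : Fin n → ℝ | ∑ i, |x i| ≤ 1}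
      ≤ volume ({x : Fin n → ℝ | ∑ i, |x i| ≤ 1} ∩ matrixCone n A) ∧
    ENNReal.ofReal (|A.det| /
          (2 * (⨆ i : Fin n, ⨆ j : Fin n, |A i j|) *
            ((⨆ j : Fin n, (Finset.univ.filter fun i : Fin n => A i j ≠ 0).card : ℕ) : ℝ)) ^ n) *
        volume {x : Fin n → ℝ | ∑ i, |x i| ≤ 1}
      ≤ ENNReal.ofReal (|A.det| / (2 * ⨆ j : Fin n, ∑ i, |A i j|) ^ n) *
        volume {x : Fin n → ℝ | ∑ i, |x i| ≤ 1} := by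
  refine ⟨volume_l1Ball_mul_le_volume_l1Ball_inter_cone A, ?_⟩
  have hM_pow_pos : 0 < (⨆ j, ∑ i, |A i j|) ^ n := by
    simpa using colL1_pow_pos_of_det_ne_zero hA
  refine mul_le_mul_left
    (ENNReal.ofReal_le_ofReal (div_le_div_of_nonneg_left (abs_nonneg _) ?_ ?_)) _
  · rw [mul_pow]
    exact mul_pos (by positivity) hM_pow_pos
  · refine pow_le_pow_left₀ (mul_nonneg zero_le_two (colL1_nonneg A)) ?_ n
    rw [mul_assoc]
    exact mul_le_mul_of_nonneg_left (colL1_le_maxAbs_mul_maxCard A) zero_le_two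
end

section
/- Let A be an n×n real matrix with det(A) ≠ 0, and let B_∞ = {x ∈ ℝⁿ : ‖x‖_∞ ≤ 1} be the closed unit ℓ_∞-ball. Then vol(B_∞ ∩ cone(A)) ≥ (|det(A)| / (2‖A‖₁)ⁿ) · vol(B_∞) ≥ (|det(A)| / (2‖A‖_max·r(A))ⁿ) · vol(B_∞), where ‖A‖₁ := max_i ∑_j |A_{ij}| is the maximum ℓ₁-norm of a row of A, ‖A‖_max = max_{i,j} |A_{ij}|, and r(A) is the maximum number of nonzero entries in a row of A. -/
open Matrix MeasureTheory
open scoped Classical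

/-- For a nonsingular `n×n` real matrix `A` and the closed unit
`ℓ_∞`-ball `B_∞`, one has
`vol(B_∞ ∩ cone(A)) ≥ (|det A| / (2‖A‖₁)ⁿ)·vol(B_∞) ≥ (|det A| / (2‖A‖_max·r(A))ⁿ)·vol(B_∞)`,
where `‖A‖₁` is the maximum row `ℓ₁`-norm, `‖A‖_max` the maximum absolute value of an
entry, and `r(A)` the maximum number of nonzero entries in a row. -/
theorem volume_linfBall_inter_cone_ge (n : ℕ) (A : Matrix (Fin n) (Fin n) ℝ)
    (hA : A.det ≠ 0) :
    ENNReal.ofReal (|A.det| / (2 * ⨆ i : Fin n, ∑ j, |A i j|) ^ n) *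
        volume {x : Fin n → ℝ | ∀ i, |x i| ≤ 1}
      ≤ volume ({x : Fin n → ℝ | ∀ i, |x i| ≤ 1} ∩ matrixCone n A) ∧
    ENNReal.ofReal (|A.det| /
          (2 * (⨆ i : Fin n, ⨆ j : Fin n, |A i j|) *
            ((⨆ i : Fin n, (Finset.univ.filter fun j : Fin n => A i j ≠ 0).card : ℕ) : ℝ)) ^ n) *
        volume {x : Fin n → ℝ | ∀ i, |x i| ≤ 1}
      ≤ ENNReal.ofReal (|A.det| / (2 * ⨆ i : Fin n, ∑ j, |A i j|) ^ n) *
        volume {x : Fin n → ℝ | ∀ i, |x i| ≤ 1} := by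
  set M : ℝ := ⨆ i : Fin n, ∑ j, |A i j| with hMdef
  have hMrow : ∀ i : Fin n, ∑ j, |A i j| ≤ M := fun i =>
    le_ciSup (f := fun i : Fin n => ∑ j, |A i j|) (Set.Finite.bddAbove (Set.finite_range _)) i
  have hrow : ∀ i : Fin n, ∃ j, A i j ≠ 0 := by
    intro i
    by_contra h
    push_neg at h
    exact hA (Matrix.det_eq_zero_of_row_eq_zero i h)
  have hMpos : Fin n → 0 < M := by
    intro i
    obtain ⟨j, hj⟩ := hrow i
    refine lt_of_lt_of_le ?_ (hMrow i)
    exact Finset.sum_pos' (fun k _ => abs_nonneg _) ⟨j, Finset.mem_univ j, abs_pos.2 hj⟩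
  have hMnonneg : 0 ≤ M := by
    cases isEmpty_or_nonempty (Fin n) with
    | inl h => simp [hMdef, Real.iSup_of_isEmpty]
    | inr h => exact (hMpos h.some).le
  have hB : {x : Fin n → ℝ | ∀ i, |x i| ≤ 1} = Set.pi Set.univ (fun _ => Set.Icc (-1:ℝ) 1) := by
    ext x
    simp only [Set.mem_setOf_eq, Set.mem_pi, Set.mem_univ, Set.mem_Icc, abs_le, forall_const]
  have hvolB : volume {x : Fin n → ℝ | ∀ i, |x i| ≤ 1} = ENNReal.ofReal 2 ^ n := by
    rw [hB, volume_pi_pi]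
    norm_num [Real.volume_Icc]
  constructor
  · -- main inequality
    set box : Set (Fin n → ℝ) := Set.pi Set.univ (fun _ => Set.Icc (0:ℝ) M⁻¹) with hbox
    have hsub : (Matrix.toLin' A) '' box
        ⊆ {x : Fin n → ℝ | ∀ i, |x i| ≤ 1} ∩ matrixCone n A := by
      rintro x ⟨y, hy, rfl⟩
      have hy' : ∀ j, 0 ≤ y j ∧ y j ≤ M⁻¹ := fun j => hy j (Set.mem_univ j)
      constructor
      · intro i
        have hMi := hMpos i
        have h1 : |(Matrix.toLin' A) y i| ≤ ∑ j, |A i j| * M⁻¹ := by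
          rw [Matrix.toLin'_apply]
          calc |A.mulVec y i| ≤ ∑ j, |A i j * y j| := by
                simp only [Matrix.mulVec, dotProduct]
                exact Finset.abs_sum_le_sum_abs _ _
            _ ≤ ∑ j, |A i j| * M⁻¹ := by
                refine Finset.sum_le_sum fun j _ => ?_
                rw [abs_mul]
                exact mul_le_mul_of_nonneg_left
                  (by rw [abs_of_nonneg (hy' j).1]; exact (hy' j).2) (abs_nonneg _)
        refine h1.trans ?_
        rw [← Finset.sum_mul]
        calc (∑ j, |A i j|) * M⁻¹ ≤ M * M⁻¹ :=
              mul_le_mul_of_nonneg_right (hMrow i) (inv_nonneg.2 hMnonneg)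
          _ = 1 := mul_inv_cancel₀ hMi.ne'
      · exact ⟨y, fun j => (hy' j).1, by rw [Matrix.toLin'_apply]⟩
    have himg : volume ((Matrix.toLin' A) '' box)
        = ENNReal.ofReal |A.det| * (ENNReal.ofReal M⁻¹) ^ n := by
      rw [Measure.addHaar_image_linearMap, LinearMap.det_toLin', hbox, volume_pi_pi]
      simp [Real.volume_Icc]
    have key : ENNReal.ofReal (|A.det| / (2 * M) ^ n) * ENNReal.ofReal 2 ^ n
        = ENNReal.ofReal |A.det| * (ENNReal.ofReal M⁻¹) ^ n := by
      rw [← ENNReal.ofReal_pow (by norm_num : (0:ℝ) ≤ 2),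
        ← ENNReal.ofReal_mul (div_nonneg (abs_nonneg _) (pow_nonneg (by linarith) n)),
        ← ENNReal.ofReal_pow (inv_nonneg.2 hMnonneg),
        ← ENNReal.ofReal_mul (abs_nonneg _)]
      congr 1
      rw [mul_pow, inv_pow]
      rcases eq_or_ne (M ^ n) 0 with h | h
      · simp [h]
      · field_simp
    rw [hvolB, key, ← himg]
    exact measure_mono hsub
  · -- comparison of the two constants
    rcases Nat.eq_zero_or_pos n with hn | hn
    · subst hn
      simp
    · refine mul_le_mul_left (ENNReal.ofReal_le_ofReal ?_) _
      haveI : Nonempty (Fin n) := ⟨⟨0, hn⟩⟩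
      set E : ℝ := ⨆ i : Fin n, ⨆ j : Fin n, |A i j| with hEdef
      set r : ℕ := ⨆ i : Fin n, (Finset.univ.filter fun j : Fin n => A i j ≠ 0).card with hrdef
      have hEntry : ∀ i j, |A i j| ≤ E := fun i j =>
        le_trans (le_ciSup (f := fun j : Fin n => |A i j|) (Set.Finite.bddAbove (Set.finite_range _)) j)
          (le_ciSup (f := fun i => ⨆ j : Fin n, |A i j|)
            (Set.Finite.bddAbove (Set.finite_range _)) i)
      obtain ⟨i0⟩ := ‹Nonempty (Fin n)›
      have hE0 : 0 ≤ E := (abs_nonneg _).trans (hEntry i0 i0)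
      have hcard : ∀ i : Fin n,
          (Finset.univ.filter fun j : Fin n => A i j ≠ 0).card ≤ r := fun i =>
        le_ciSup (f := fun i : Fin n => (Finset.univ.filter fun j : Fin n => A i j ≠ 0).card)
          (Set.Finite.bddAbove (Set.finite_range _)) i
      have hMle : M ≤ E * (r : ℝ) := by
        refine ciSup_le fun i => ?_
        have h1 : ∑ j, |A i j|
            = ∑ j ∈ Finset.univ.filter (fun j : Fin n => A i j ≠ 0), |A i j| := by
          refine (Finset.sum_filter_of_ne fun j _ hj => ?_).symm
          exact fun h => hj (by simp [h])
        rw [h1]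
        calc ∑ j ∈ Finset.univ.filter (fun j : Fin n => A i j ≠ 0), |A i j|
            ≤ (Finset.univ.filter (fun j : Fin n => A i j ≠ 0)).card • E :=
              Finset.sum_le_card_nsmul _ _ _ fun j _ => hEntry i j
          _ = ((Finset.univ.filter (fun j : Fin n => A i j ≠ 0)).card : ℝ) * E := by
              rw [nsmul_eq_mul]
          _ ≤ (r : ℝ) * E := by
              exact mul_le_mul_of_nonneg_right (Nat.cast_le.2 (hcard i)) hE0
          _ = E * (r : ℝ) := mul_comm _ _
      refine div_le_div_of_nonneg_left (abs_nonneg _)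
        (pow_pos (by linarith [hMpos i0]) n) ?_
      refine pow_le_pow_left₀ (by linarith [hMpos i0]) ?_ n
      calc 2 * M ≤ 2 * (E * (r : ℝ)) := by linarith
        _ = 2 * E * (r : ℝ) := by ring
end

section
/- Let A be an m×n integer matrix with rank(A) = n, let b ∈ ℚᵐ, and let P = {x ∈ ℝⁿ : A x ≤ b}. Define γ₁(A) as the maximum, over all nonsingular square submatrices B of A, of the maximum ℓ₁-norm of a row of B, and γ_∞(A) as the maximum, over all nonsingular square submatrices B of A, of the maximum ℓ₁-norm of a column of B. Then the set of vertices (extreme points) of P is finite and |vertices(P)| ≤ 2ⁿ · (min{γ₁(A), γ_∞(A)})ⁿ ≤ (2‖A‖_max)ⁿ · s(A)ⁿ, where ‖A‖_max = max_{i,j}|A_{ij}| and s(A) is the minimum of the two quantities: the maximum number of nonzero entries in a row of a nonsingular square submatrix of A, and the maximum number of nonzero entries in a column of a nonsingular square submatrix of A. -/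
open Matrix
open scoped Classical

/-- `γ₁(A)`: the maximum, over all nonsingular square submatrices `B` of `A`, of the
maximum `ℓ₁`-norm of a row of `B`. -/
noncomputable def gammaRow (m n : ℕ) (A : Matrix (Fin m) (Fin n) ℤ) : ℕ :=
  sSup {x : ℕ | ∃ (k : ℕ) (r : Fin k ↪ Fin m) (c : Fin k ↪ Fin n),
    (A.submatrix r c).det ≠ 0 ∧
    x = Finset.univ.sup fun i : Fin k => ∑ j : Fin k, (A.submatrix r c i j).natAbs}

/-- `γ_∞(A)`: the maximum, over all nonsingular square submatrices `B` of `A`, of the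
maximum `ℓ₁`-norm of a column of `B`. -/
noncomputable def gammaCol (m n : ℕ) (A : Matrix (Fin m) (Fin n) ℤ) : ℕ :=
  sSup {x : ℕ | ∃ (k : ℕ) (r : Fin k ↪ Fin m) (c : Fin k ↪ Fin n),
    (A.submatrix r c).det ≠ 0 ∧
    x = Finset.univ.sup fun j : Fin k => ∑ i : Fin k, (A.submatrix r c i j).natAbs}

/-- The maximum number of nonzero entries in a row of a nonsingular square submatrix of `A`. -/
noncomputable def weakRowSparsity (m n : ℕ) (A : Matrix (Fin m) (Fin n) ℤ) : ℕ :=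
  sSup {x : ℕ | ∃ (k : ℕ) (r : Fin k ↪ Fin m) (c : Fin k ↪ Fin n),
    (A.submatrix r c).det ≠ 0 ∧
    x = Finset.univ.sup fun i : Fin k =>
      (Finset.univ.filter fun j : Fin k => A.submatrix r c i j ≠ 0).card}

/-- The maximum number of nonzero entries in a column of a nonsingular square submatrix of `A`. -/
noncomputable def weakColSparsity (m n : ℕ) (A : Matrix (Fin m) (Fin n) ℤ) : ℕ :=
  sSup {x : ℕ | ∃ (k : ℕ) (r : Fin k ↪ Fin m) (c : Fin k ↪ Fin n),
    (A.submatrix r c).det ≠ 0 ∧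
    x = Finset.univ.sup fun j : Fin k =>
      (Finset.univ.filter fun i : Fin k => A.submatrix r c i j ≠ 0).card}

/-- `‖A‖_max`: the maximum absolute value of an entry of `A`. -/
def maxNorm (m n : ℕ) (A : Matrix (Fin m) (Fin n) ℤ) : ℕ :=
  Finset.univ.sup fun i : Fin m => Finset.univ.sup fun j : Fin n => (A i j).natAbs

/-!
Every vertex `v` of `P = {x | A x ≤ b}` has a basis: `n` constraints tight at `v` whose rows form
a nonsingular integer matrix `B_v`. For `λ > 0` the vertex `v` is the unique maximizer of
`(λ B_v) ⬝ x` over `P`, so the open normal cones `{λ B_v | λ > 0}` of distinct vertices are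
disjoint. As `|det B_v| ≥ 1`, the image of a set `S` of positive vectors under `λ ↦ λ B_v` has
volume at least `vol S`. For the open unit cube these images lie in the cube `[-γ_∞, γ_∞]ⁿ` of
volume `(2γ_∞)ⁿ`; for the open standard simplex they lie in the `ℓ₁`-ball of radius `γ₁`, which
`2ⁿ` reflections of the scaled simplex cover, so its volume is at most `(2γ₁)ⁿ vol S`. Comparing
volumes gives at most `(2γ)ⁿ` vertices.
-/

open MeasureTheory Filter Topology Set Function

lemma exists_submatrix_det_ne_zero_of_span_eq_top {ι K : Type*} [Field K] {n : ℕ}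
    (M : Matrix ι (Fin n) K) (T : Set ι) (hT : Submodule.span K (range fun i : T => M i) = ⊤) :
    ∃ r : Fin n ↪ ι, (∀ k, r k ∈ T) ∧ (M.submatrix r id).det ≠ 0 := by
  obtain ⟨κ, a, ha, hspan, hli⟩ := exists_linearIndependent' K fun i : T => M i
  have : Finite κ := hli.finite
  have : Fintype κ := Fintype.ofFinite κ
  have hcard : Fintype.card κ = n := by
    simpa using (Module.finrank_eq_card_basis (Module.Basis.mk hli (by rw [hspan, hT]))).symm
  let e : Fin n ≃ κ := (Fintype.equivFinOfCardEq hcard).symm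
  refine ⟨⟨Subtype.val ∘ a ∘ e, Subtype.val_injective.comp (ha.comp e.injective)⟩,
    fun k => (a (e k)).2, ?_⟩
  rw [← isUnit_iff_ne_zero, ← Matrix.isUnit_iff_isUnit_det, ← linearIndependent_rows_iff_isUnit]
  exact hli.comp e e.injective

section VecMulBounds

variable {κ κ' : Type*} [Fintype κ] (B : Matrix κ κ' ℝ)

lemma abs_vecMul_le_sum_abs {l : κ → ℝ} (hl : ∀ k, |l k| ≤ 1) (j : κ') :
    |(l ᵥ* B) j| ≤ ∑ k, |B k j| :=
  (Finset.abs_sum_le_sum_abs _ _).trans <| Finset.sum_le_sum fun k _ => by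
    rw [abs_mul]
    exact mul_le_of_le_one_left (abs_nonneg _) (hl k)

lemma sum_abs_vecMul_le [Fintype κ'] (l : κ → ℝ) :
    ∑ j, |(l ᵥ* B) j| ≤ ∑ k, |l k| * ∑ j, |B k j| := by
  simp_rw [Finset.mul_sum, ← abs_mul]
  rw [Finset.sum_comm]
  exact Finset.sum_le_sum fun j _ => Finset.abs_sum_le_sum_abs _ _

end VecMulBounds

section Volume

variable {n : ℕ}

lemma volume_image_vecMulLinear (B : Matrix (Fin n) (Fin n) ℝ) (S : Set (Fin n → ℝ)) :
    volume (B.vecMulLinear '' S) = ENNReal.ofReal |B.det| * volume S := by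
  rw [← Matrix.mulVecLin_transpose, ← Matrix.toLin'_apply', Measure.addHaar_image_linearMap,
    LinearMap.det_toLin', Matrix.det_transpose]

lemma measurableSet_image_vecMulLinear {B : Matrix (Fin n) (Fin n) ℝ} (hB : B.det ≠ 0)
    {S : Set (Fin n → ℝ)} (hS : MeasurableSet S) : MeasurableSet (B.vecMulLinear '' S) :=
  hS.image_of_continuousOn_injOn (LinearMap.continuous_of_finiteDimensional _).continuousOn
    (Matrix.vecMul_injective_iff_isUnit.2 (B.isUnit_iff_isUnit_det.2 hB.isUnit)).injOn

def openStdSimplex (n : ℕ) : Set (Fin n → ℝ) :=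
  {l | (∀ k, 0 < l k) ∧ ∑ k, l k < 1}

lemma measurableSet_openStdSimplex : MeasurableSet (openStdSimplex n) := by
  unfold openStdSimplex
  measurability

lemma sum_abs_vecMul_le_of_mem_openStdSimplex {κ : Type*} [Fintype κ]
    {B : Matrix (Fin n) κ ℝ} {g : ℝ} (hg : 0 ≤ g) (hB : ∀ k, ∑ j, |B k j| ≤ g)
    {l : Fin n → ℝ} (hl : l ∈ openStdSimplex n) : ∑ j, |(l ᵥ* B) j| ≤ g :=
  calc ∑ j, |(l ᵥ* B) j|
      ≤ ∑ k, |l k| * ∑ j, |B k j| := sum_abs_vecMul_le B l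
    _ ≤ ∑ k, l k * g := Finset.sum_le_sum fun k _ => by
        rw [abs_of_pos (hl.1 k)]
        exact mul_le_mul_of_nonneg_left (hB k) (hl.1 k).le
    _ ≤ g := by
        rw [← Finset.sum_mul]
        exact mul_le_of_le_one_left hg hl.2.le

lemma volume_l1Ball_lt_one_ne_top : volume {x : Fin n → ℝ | ∑ j, |x j| < 1} ≠ ⊤ := by
  have h := volume_sum_rpow_lt_one (Fin n) (p := 1) le_rfl
  simp only [Real.rpow_one] at h
  exact h ▸ ENNReal.ofReal_ne_top

lemma volume_l1Ball_le_s9 {r : ℝ} (hr : 0 ≤ r) :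
    volume {x : Fin n → ℝ | ∑ j, |x j| ≤ r}
      = ENNReal.ofReal r ^ n * volume {x : Fin n → ℝ | ∑ j, |x j| < 1} := by
  rcases n.eq_zero_or_pos with rfl | hn
  · simp [hr]
  have : Nonempty (Fin n) := ⟨⟨0, hn⟩⟩
  have hle := volume_sum_rpow_le (Fin n) (p := 1) le_rfl r
  have hlt := volume_sum_rpow_lt_one (Fin n) (p := 1) le_rfl
  simp only [Real.rpow_one, div_one] at hle hlt
  rw [hle, hlt, Fintype.card_fin]

/-- The unit `ℓ₁`-ball is, up to the null coordinate hyperplanes, covered by the `2ⁿ`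
reflections of the open standard simplex. -/
lemma volume_l1Ball_lt_one_le :
    volume {x : Fin n → ℝ | ∑ j, |x j| < 1} ≤ 2 ^ n * volume (openStdSimplex n) := by
  let D : (Fin n → Bool) → Matrix (Fin n) (Fin n) ℝ := fun σ =>
    Matrix.diagonal fun i => if σ i then 1 else -1
  have hD : ∀ σ, volume ((D σ).vecMulLinear '' openStdSimplex n) = volume (openStdSimplex n) :=
    fun σ => by
      rw [volume_image_vecMulLinear, Matrix.det_diagonal, Finset.abs_prod]
      simp [apply_ite]
  have hcover : ∀ x : Fin n → ℝ, (∀ i, x i ≠ 0) → ∑ j, |x j| < 1 →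
      x ∈ ⋃ σ, (D σ).vecMulLinear '' openStdSimplex n := fun x hx hx1 => by
    refine mem_iUnion.2 ⟨fun i => decide (0 < x i), fun i => |x i|,
      ⟨fun k => abs_pos.2 (hx k), hx1⟩, funext fun i => ?_⟩
    rcases (hx i).lt_or_gt with hneg | hpos
    · simp [D, Matrix.vecMul_diagonal, hneg.not_gt, abs_of_neg hneg]
    · simp [D, Matrix.vecMul_diagonal, hpos, abs_of_pos hpos]
  have hae : ∀ᵐ x : Fin n → ℝ, ∀ i, x i ≠ 0 := ae_all_iff.2 fun i => Measure.ae_eval_ne _ i 0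
  calc volume {x : Fin n → ℝ | ∑ j, |x j| < 1}
      ≤ volume (⋃ σ, (D σ).vecMulLinear '' openStdSimplex n) := measure_mono_ae (hae.mono hcover)
    _ ≤ ∑ σ, volume ((D σ).vecMulLinear '' openStdSimplex n) := measure_iUnion_fintype_le _ _
    _ = 2 ^ n * volume (openStdSimplex n) := by simp [hD]

lemma volume_openStdSimplex_ne_zero : volume (openStdSimplex n) ≠ 0 := fun h => by
  have hball : 0 < volume {x : Fin n → ℝ | ∑ j, |x j| < 1} :=
    (isOpen_lt (by fun_prop) continuous_const).measure_pos volume ⟨0, by simp⟩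
  simpa [h] using hball.trans_le volume_l1Ball_lt_one_le

lemma volume_openStdSimplex_ne_top : volume (openStdSimplex n) ≠ ⊤ :=
  ne_top_of_le_ne_top volume_l1Ball_lt_one_ne_top <| measure_mono fun l hl => by
    simpa [abs_of_pos (hl.1 _)] using hl.2

lemma volume_l1Ball_le_mul_volume_openStdSimplex {r : ℝ} (hr : 0 ≤ r) :
    volume {x : Fin n → ℝ | ∑ j, |x j| ≤ r}
      ≤ ENNReal.ofReal (2 * r) ^ n * volume (openStdSimplex n) := by
  rw [volume_l1Ball_le_s9 hr, ENNReal.ofReal_mul zero_le_two, mul_pow, ENNReal.ofReal_ofNat,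
    mul_comm (2 ^ n), mul_assoc]
  gcongr
  exact volume_l1Ball_lt_one_le

end Volume

section Polyhedron

variable {ι : Type*} {n : ℕ}

def polyhedron (M : Matrix ι (Fin n) ℝ) (c : ι → ℝ) : Set (Fin n → ℝ) :=
  {x | ∀ i, M i ⬝ᵥ x ≤ c i}

def IsVertexBasis (M : Matrix ι (Fin n) ℝ) (c : ι → ℝ) (v : Fin n → ℝ) (r : Fin n ↪ ι) : Prop :=
  (M.submatrix r id).det ≠ 0 ∧ ∀ k, M (r k) ⬝ᵥ v = c (r k)

variable {M : Matrix ι (Fin n) ℝ} {c : ι → ℝ}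

lemma eq_zero_of_dotProduct_tight_eq_zero [Finite ι] {v d : Fin n → ℝ}
    (hv : v ∈ (polyhedron M c).extremePoints ℝ) (hd : ∀ i, M i ⬝ᵥ v = c i → M i ⬝ᵥ d = 0) :
    d = 0 := by
  have hline : ∀ᶠ s in 𝓝 (0 : ℝ), v + s • d ∈ polyhedron M c := by
    refine eventually_all.2 fun i => ?_
    rcases (hv.1 i).eq_or_lt with htight | hslack
    · exact Eventually.of_forall fun s => by
        simp [dotProduct_add, dotProduct_smul, htight, hd i htight]
    · have hcont : Continuous fun s : ℝ => M i ⬝ᵥ (v + s • d) := by fun_prop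
      exact (hcont.continuousAt.eventually_lt continuousAt_const (by simpa using hslack)).mono
        fun _ => le_of_lt
  have hline' : ∀ᶠ s in 𝓝 (0 : ℝ), v + (-s) • d ∈ polyhedron M c :=
    (continuous_neg.tendsto' (0 : ℝ) 0 neg_zero).eventually hline
  obtain ⟨s, ⟨hs_plus, hs_minus⟩, hs⟩ :=
    (((hline.and hline').filter_mono nhdsWithin_le_nhds).and
      (self_mem_nhdsWithin : Ioi (0 : ℝ) ∈ 𝓝[>] 0)).exists
  have hmid : v ∈ openSegment ℝ (v + s • d) (v + (-s) • d) :=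
    ⟨1 / 2, 1 / 2, by norm_num, by norm_num, by norm_num, by module⟩
  have hsd : s • d = 0 := by
    simpa using (mem_extremePoints.1 hv).2 _ hs_plus _ hs_minus hmid |>.1
  exact (smul_eq_zero.1 hsd).resolve_left (ne_of_gt hs)

lemma span_tight_rows_eq_top [Finite ι] {v : Fin n → ℝ}
    (hv : v ∈ (polyhedron M c).extremePoints ℝ) :
    Submodule.span ℝ (range fun i : {i | M i ⬝ᵥ v = c i} => M i) = ⊤ := by
  rw [← Submodule.dualAnnihilator_eq_bot_iff, eq_bot_iff]
  intro f hf
  obtain ⟨d, rfl⟩ := (dotProductEquiv ℝ (Fin n)).surjective f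
  have hd : d = 0 := eq_zero_of_dotProduct_tight_eq_zero hv fun i hi => by
    rw [dotProduct_comm]
    exact (Submodule.mem_dualAnnihilator _).1 hf _ (Submodule.subset_span ⟨⟨i, hi⟩, rfl⟩)
  simp [hd]

lemma exists_isVertexBasis_of_mem_extremePoints [Finite ι] {v : Fin n → ℝ}
    (hv : v ∈ (polyhedron M c).extremePoints ℝ) : ∃ r, IsVertexBasis M c v r := by
  obtain ⟨r, hrT, hdet⟩ :=
    exists_submatrix_det_ne_zero_of_span_eq_top M _ (span_tight_rows_eq_top hv)
  exact ⟨r, hdet, hrT⟩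

namespace IsVertexBasis

variable {v w x : Fin n → ℝ} {r : Fin n ↪ ι}

lemma submatrix_mulVec (hv : IsVertexBasis M c v r) : M.submatrix r id *ᵥ v = c ∘ r :=
  funext hv.2

lemma eq (hv : IsVertexBasis M c v r) (hw : IsVertexBasis M c w r) : v = w :=
  Matrix.mulVec_injective_iff_isUnit.2 ((M.submatrix r id).isUnit_iff_isUnit_det.2 hv.1.isUnit)
    (hv.submatrix_mulVec.trans hw.submatrix_mulVec.symm)

lemma dotProduct_lt (hv : IsVertexBasis M c v r) (hx : x ∈ polyhedron M c) (hxv : x ≠ v)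
    {l : Fin n → ℝ} (hl : ∀ k, 0 < l k) :
    (l ᵥ* M.submatrix r id) ⬝ᵥ x < (l ᵥ* M.submatrix r id) ⬝ᵥ v := by
  rw [← dotProduct_mulVec, ← dotProduct_mulVec]
  have hle : ∀ k, (M.submatrix r id *ᵥ x) k ≤ (M.submatrix r id *ᵥ v) k := fun k => by
    rw [hv.submatrix_mulVec]
    exact hx (r k)
  obtain ⟨k, hk⟩ : ∃ k, (M.submatrix r id *ᵥ x) k ≠ (M.submatrix r id *ᵥ v) k := by
    by_contra! h
    exact hxv (IsVertexBasis.eq ⟨hv.1, fun k => (h k).trans (hv.2 k)⟩ hv)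
  exact Finset.sum_lt_sum (fun k _ => mul_le_mul_of_nonneg_left (hle k) (hl k).le)
    ⟨k, Finset.mem_univ k, mul_lt_mul_of_pos_left ((hle k).lt_of_ne hk) (hl k)⟩

/-- The open normal cones at distinct vertices are disjoint. -/
lemma disjoint_image_vecMulLinear {s : Fin n ↪ ι}
    (hv : IsVertexBasis M c v r) (hw : IsVertexBasis M c w s)
    (hvP : v ∈ polyhedron M c) (hwP : w ∈ polyhedron M c) (hvw : v ≠ w)
    {S : Set (Fin n → ℝ)} (hS : ∀ l ∈ S, ∀ k, 0 < l k) :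
    Disjoint ((M.submatrix r id).vecMulLinear '' S) ((M.submatrix s id).vecMulLinear '' S) := by
  rw [Set.disjoint_left]
  rintro p ⟨l, hl, rfl⟩ ⟨l', hl', hp⟩
  have h₁ := hv.dotProduct_lt hwP hvw.symm (hS l hl)
  have h₂ := hw.dotProduct_lt hvP hvw (hS l' hl')
  simp only [Matrix.vecMulLinear_apply] at hp h₁
  rw [hp] at h₂
  exact lt_asymm h₁ h₂

end IsVertexBasis

lemma finite_extremePoints_polyhedron [Finite ι] :
    ((polyhedron M c).extremePoints ℝ).Finite := by
  choose r hr using fun v : (polyhedron M c).extremePoints ℝ =>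
    exists_isVertexBasis_of_mem_extremePoints v.2
  refine Set.finite_coe_iff.1 (Finite.of_injective r fun v w h => Subtype.ext ?_)
  exact (hr v).eq (h ▸ hr w)

lemma ncard_extremePoints_mul_volume_le [Finite ι]
    (hdet : ∀ r : Fin n ↪ ι, (M.submatrix r id).det ≠ 0 → 1 ≤ |(M.submatrix r id).det|)
    {S K : Set (Fin n → ℝ)} (hS : MeasurableSet S) (hS_pos : ∀ l ∈ S, ∀ k, 0 < l k)
    (hSK : ∀ r : Fin n ↪ ι, (M.submatrix r id).det ≠ 0 →
      (M.submatrix r id).vecMulLinear '' S ⊆ K) :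
    ((polyhedron M c).extremePoints ℝ).ncard * volume S ≤ volume K := by
  set E := (polyhedron M c).extremePoints ℝ
  have : Fintype E := finite_extremePoints_polyhedron.fintype
  choose r hr using fun v : E => exists_isVertexBasis_of_mem_extremePoints v.2
  set U : E → Set (Fin n → ℝ) := fun v => (M.submatrix (r v) id).vecMulLinear '' S
  have hU : Pairwise (Disjoint on U) := fun v w hvw =>
    (hr v).disjoint_image_vecMulLinear (hr w) v.2.1 w.2.1 (Subtype.coe_ne_coe.2 hvw) hS_pos
  calc (E.ncard : ENNReal) * volume S = ∑ _v : E, volume S := by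
        rw [Finset.sum_const, Finset.card_univ, nsmul_eq_mul, Set.ncard_eq_toFinset_card',
          Set.toFinset_card]
    _ ≤ ∑ v : E, volume (U v) := Finset.sum_le_sum fun v _ => by
        rw [volume_image_vecMulLinear]
        exact le_mul_of_one_le_left' (ENNReal.one_le_ofReal.2 (hdet _ (hr v).1))
    _ = volume (⋃ v, U v) := by
        rw [measure_iUnion hU fun v => measurableSet_image_vecMulLinear (hr v).1 hS, tsum_fintype]
    _ ≤ volume K := measure_mono (iUnion_subset fun v => hSK _ (hr v).1)

end Polyhedron

lemma Finset.sum_natAbs_le_card_filter_ne_zero_mul {α : Type*} (s : Finset α) (f : α → ℤ)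
    {N : ℕ} (hf : ∀ j ∈ s, (f j).natAbs ≤ N) :
    ∑ j ∈ s, (f j).natAbs ≤ (s.filter (f · ≠ 0)).card * N := by
  rw [← Finset.sum_filter_of_ne fun _ _ h => by simpa using h]
  exact Finset.sum_le_card_nsmul _ _ _ fun j hj => hf j (Finset.mem_filter.1 hj).1

section SubmatrixSup

variable {m n : ℕ} (A : Matrix (Fin m) (Fin n) ℤ)

lemma natAbs_le_maxNorm (i : Fin m) (j : Fin n) : (A i j).natAbs ≤ maxNorm m n A :=
  (Finset.le_sup (f := fun j => (A i j).natAbs) (Finset.mem_univ j)).trans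
    (Finset.le_sup (f := fun i => Finset.univ.sup fun j => (A i j).natAbs) (Finset.mem_univ i))

lemma le_sSup_of_det_submatrix_ne_zero (f : ∀ k, (Fin k ↪ Fin m) → (Fin k ↪ Fin n) → ℕ)
    {N : ℕ} (hN : ∀ k r c, f k r c ≤ N) {k : ℕ} {r : Fin k ↪ Fin m} {c : Fin k ↪ Fin n}
    (hdet : (A.submatrix r c).det ≠ 0) :
    f k r c ≤ sSup {x | ∃ (k : ℕ) (r : Fin k ↪ Fin m) (c : Fin k ↪ Fin n),
      (A.submatrix r c).det ≠ 0 ∧ x = f k r c} :=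
  le_csSup ⟨N, by rintro _ ⟨k, r, c, -, rfl⟩; exact hN k r c⟩ ⟨k, r, c, hdet, rfl⟩

lemma card_filter_le_of_embedding {k : ℕ} (c : Fin k ↪ Fin n) (p : Fin k → Prop)
    [DecidablePred p] : (Finset.univ.filter p).card ≤ n :=
  (Finset.card_filter_le _ _).trans (by simpa using Fintype.card_le_of_embedding c)

lemma sum_natAbs_submatrix_row_le {k : ℕ} (r : Fin k ↪ Fin m) (c : Fin k ↪ Fin n) (i : Fin k) :
    ∑ j, (A.submatrix r c i j).natAbs ≤ n * maxNorm m n A :=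
  (Finset.sum_natAbs_le_card_filter_ne_zero_mul _ _ fun _ _ => natAbs_le_maxNorm A _ _).trans
    (Nat.mul_le_mul_right _ (card_filter_le_of_embedding c _))

lemma sum_natAbs_submatrix_col_le {k : ℕ} (r : Fin k ↪ Fin m) (c : Fin k ↪ Fin n) (j : Fin k) :
    ∑ i, (A.submatrix r c i j).natAbs ≤ n * maxNorm m n A :=
  (Finset.sum_natAbs_le_card_filter_ne_zero_mul _ _ fun _ _ => natAbs_le_maxNorm A _ _).trans
    (Nat.mul_le_mul_right _ (card_filter_le_of_embedding c _))

lemma sum_natAbs_le_gammaRow (r : Fin n ↪ Fin m) (hdet : (A.submatrix r id).det ≠ 0)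
    (k : Fin n) : ∑ j, (A (r k) j).natAbs ≤ gammaRow m n A :=
  (Finset.le_sup (f := fun i => ∑ j, (A.submatrix r (Embedding.refl _) i j).natAbs)
    (Finset.mem_univ k)).trans <|
    le_sSup_of_det_submatrix_ne_zero A
      (fun _ r c => Finset.univ.sup fun i => ∑ j, (A.submatrix r c i j).natAbs)
      (fun _ r c => Finset.sup_le fun i _ => sum_natAbs_submatrix_row_le A r c i)
      (c := .refl _) hdet

lemma sum_natAbs_le_gammaCol (r : Fin n ↪ Fin m) (hdet : (A.submatrix r id).det ≠ 0)
    (j : Fin n) : ∑ k, (A (r k) j).natAbs ≤ gammaCol m n A :=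
  (Finset.le_sup (f := fun j => ∑ i, (A.submatrix r (Embedding.refl _) i j).natAbs)
    (Finset.mem_univ j)).trans <|
    le_sSup_of_det_submatrix_ne_zero A
      (fun _ r c => Finset.univ.sup fun j => ∑ i, (A.submatrix r c i j).natAbs)
      (fun _ r c => Finset.sup_le fun j _ => sum_natAbs_submatrix_col_le A r c j)
      (c := .refl _) hdet

lemma gammaRow_le_maxNorm_mul_weakRowSparsity :
    gammaRow m n A ≤ maxNorm m n A * weakRowSparsity m n A := by
  unfold gammaRow
  refine csSup_le' ?_
  rintro _ ⟨k, r, c, hdet, rfl⟩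
  refine Finset.sup_le fun i _ => ?_
  rw [mul_comm]
  refine (Finset.sum_natAbs_le_card_filter_ne_zero_mul _ _ fun _ _ =>
    natAbs_le_maxNorm A _ _).trans (Nat.mul_le_mul_right _ ?_)
  exact (Finset.le_sup (f := fun i => (Finset.univ.filter fun j => A.submatrix r c i j ≠ 0).card)
    (Finset.mem_univ i)).trans <| le_sSup_of_det_submatrix_ne_zero A
      (fun _ r c => Finset.univ.sup fun i =>
        (Finset.univ.filter fun j => A.submatrix r c i j ≠ 0).card)
      (fun _ _ c => Finset.sup_le fun _ _ => card_filter_le_of_embedding c _) hdet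

lemma gammaCol_le_maxNorm_mul_weakColSparsity :
    gammaCol m n A ≤ maxNorm m n A * weakColSparsity m n A := by
  unfold gammaCol
  refine csSup_le' ?_
  rintro _ ⟨k, r, c, hdet, rfl⟩
  refine Finset.sup_le fun j _ => ?_
  rw [mul_comm]
  refine (Finset.sum_natAbs_le_card_filter_ne_zero_mul _ _ fun _ _ =>
    natAbs_le_maxNorm A _ _).trans (Nat.mul_le_mul_right _ ?_)
  exact (Finset.le_sup (f := fun j => (Finset.univ.filter fun i => A.submatrix r c i j ≠ 0).card)
    (Finset.mem_univ j)).trans <| le_sSup_of_det_submatrix_ne_zero A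
      (fun _ r c => Finset.univ.sup fun j =>
        (Finset.univ.filter fun i => A.submatrix r c i j ≠ 0).card)
      (fun _ _ c => Finset.sup_le fun _ _ => card_filter_le_of_embedding c _) hdet

end SubmatrixSup

section IntegerPolyhedron

variable {m n : ℕ} (A : Matrix (Fin m) (Fin n) ℤ) (c : Fin m → ℝ)

lemma det_submatrix_map_intCast {κ : Type*} [Fintype κ] [DecidableEq κ] (r : κ → Fin m)
    (s : κ → Fin n) : ((A.map (Int.cast : ℤ → ℝ)).submatrix r s).det = (A.submatrix r s).det := by
  rw [Int.cast_det, Matrix.submatrix_map]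

lemma one_le_abs_det_submatrix_map_intCast (r : Fin n ↪ Fin m)
    (hr : ((A.map (Int.cast : ℤ → ℝ)).submatrix r id).det ≠ 0) :
    1 ≤ |((A.map (Int.cast : ℤ → ℝ)).submatrix r id).det| := by
  rw [det_submatrix_map_intCast] at hr ⊢
  exact_mod_cast Int.one_le_abs (by exact_mod_cast hr)

lemma sum_abs_submatrix_map_intCast_row_le_gammaRow (r : Fin n ↪ Fin m)
    (hr : ((A.map (Int.cast : ℤ → ℝ)).submatrix r id).det ≠ 0) (k : Fin n) :
    ∑ j, |(A.map (Int.cast : ℤ → ℝ)).submatrix r id k j| ≤ gammaRow m n A := by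
  rw [det_submatrix_map_intCast, Int.cast_ne_zero] at hr
  have h := sum_natAbs_le_gammaRow A r hr k
  zify at h
  simp only [Matrix.submatrix_apply, Matrix.map_apply, id_eq]
  exact_mod_cast h

lemma sum_abs_submatrix_map_intCast_col_le_gammaCol (r : Fin n ↪ Fin m)
    (hr : ((A.map (Int.cast : ℤ → ℝ)).submatrix r id).det ≠ 0) (j : Fin n) :
    ∑ k, |(A.map (Int.cast : ℤ → ℝ)).submatrix r id k j| ≤ gammaCol m n A := by
  rw [det_submatrix_map_intCast, Int.cast_ne_zero] at hr
  have h := sum_natAbs_le_gammaCol A r hr j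
  zify at h
  simp only [Matrix.submatrix_apply, Matrix.map_apply, id_eq]
  exact_mod_cast h

theorem ncard_extremePoints_le_two_mul_gammaCol_pow :
    ((polyhedron (A.map (Int.cast : ℤ → ℝ)) c).extremePoints ℝ).ncard
      ≤ (2 * gammaCol m n A) ^ n := by
  have hg : (0 : ℝ) ≤ gammaCol m n A := Nat.cast_nonneg _
  have hcount := ncard_extremePoints_mul_volume_le (c := c)
    (one_le_abs_det_submatrix_map_intCast A) (S := pi univ fun _ => Ioo 0 1)
    (K := Metric.closedBall 0 (gammaCol m n A)) (MeasurableSet.univ_pi fun _ => measurableSet_Ioo)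
    (fun l hl k => (hl k (mem_univ k)).1) fun r hr => by
      rintro _ ⟨l, hl, rfl⟩
      refine mem_closedBall_zero_iff.2 <| (pi_norm_le_iff_of_nonneg hg).2 fun j => ?_
      have hl1 : ∀ k, |l k| ≤ 1 := fun k =>
        (abs_of_pos (hl k (mem_univ k)).1).trans_le (hl k (mem_univ k)).2.le
      exact (abs_vecMul_le_sum_abs _ hl1 j).trans
        (sum_abs_submatrix_map_intCast_col_le_gammaCol A r hr j)
  rw [Real.volume_pi_Ioo, Real.volume_pi_closedBall 0 hg] at hcount
  simp only [sub_zero, ENNReal.ofReal_one, Finset.prod_const_one, mul_one, Fintype.card_fin]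
    at hcount
  rw [← Nat.cast_ofNat, ← Nat.cast_mul, ← Nat.cast_pow, ENNReal.ofReal_natCast] at hcount
  exact_mod_cast hcount

theorem ncard_extremePoints_le_two_mul_gammaRow_pow :
    ((polyhedron (A.map (Int.cast : ℤ → ℝ)) c).extremePoints ℝ).ncard
      ≤ (2 * gammaRow m n A) ^ n := by
  have hg : (0 : ℝ) ≤ gammaRow m n A := Nat.cast_nonneg _
  have hcount := ncard_extremePoints_mul_volume_le (c := c)
    (one_le_abs_det_submatrix_map_intCast A) measurableSet_openStdSimplex
    (K := {y | ∑ j, |y j| ≤ gammaRow m n A}) (fun l hl => hl.1) fun r hr => by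
      rintro _ ⟨l, hl, rfl⟩
      exact sum_abs_vecMul_le_of_mem_openStdSimplex hg
        (sum_abs_submatrix_map_intCast_row_le_gammaRow A r hr) hl
  have key := hcount.trans (volume_l1Ball_le_mul_volume_openStdSimplex hg)
  rw [← Nat.cast_ofNat, ← Nat.cast_mul, ENNReal.ofReal_natCast, ← Nat.cast_pow] at key
  exact_mod_cast (ENNReal.mul_le_mul_iff_left volume_openStdSimplex_ne_zero
    volume_openStdSimplex_ne_top).1 key

end IntegerPolyhedron

theorem card_vertices_le_sparse_bound_general (m n : ℕ) (A : Matrix (Fin m) (Fin n) ℤ)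
    (b : Fin m → ℚ) :
    (Set.extremePoints ℝ
        {x : Fin n → ℝ | ∀ i, ∑ j, (A i j : ℝ) * x j ≤ (b i : ℝ)}).Finite ∧
    (Set.extremePoints ℝ
        {x : Fin n → ℝ | ∀ i, ∑ j, (A i j : ℝ) * x j ≤ (b i : ℝ)}).ncard
      ≤ 2 ^ n * min (gammaRow m n A) (gammaCol m n A) ^ n ∧
    2 ^ n * min (gammaRow m n A) (gammaCol m n A) ^ n
      ≤ (2 * maxNorm m n A) ^ n * min (weakRowSparsity m n A) (weakColSparsity m n A) ^ n := by
  change ((polyhedron (A.map (Int.cast : ℤ → ℝ)) fun i => (b i : ℝ)).extremePoints ℝ).Finite ∧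
    ((polyhedron (A.map (Int.cast : ℤ → ℝ)) fun i => (b i : ℝ)).extremePoints ℝ).ncard ≤ _ ∧ _
  refine ⟨finite_extremePoints_polyhedron, ?_, ?_⟩
  · rw [← mul_pow, ← Nat.mul_min_mul_left, (pow_left_mono n).map_min]
    exact le_min (ncard_extremePoints_le_two_mul_gammaRow_pow A _)
      (ncard_extremePoints_le_two_mul_gammaCol_pow A _)
  · calc 2 ^ n * min (gammaRow m n A) (gammaCol m n A) ^ n
        ≤ 2 ^ n * (maxNorm m n A * min (weakRowSparsity m n A) (weakColSparsity m n A)) ^ n := by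
          rw [← Nat.mul_min_mul_left]
          gcongr
          exacts [gammaRow_le_maxNorm_mul_weakRowSparsity A,
            gammaCol_le_maxNorm_mul_weakColSparsity A]
      _ = (2 * maxNorm m n A) ^ n * min (weakRowSparsity m n A) (weakColSparsity m n A) ^ n := by
          ring

/-- For an `m×n` integer matrix `A` of rank `n`, `b ∈ ℚᵐ`, and
`P = {x ∈ ℝⁿ : A x ≤ b}`, the set of vertices of `P` is finite and
`|vertices(P)| ≤ 2ⁿ · (min{γ₁(A), γ_∞(A)})ⁿ ≤ (2‖A‖_max)ⁿ · s(A)ⁿ`. -/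
theorem card_vertices_le_sparse_bound (m n : ℕ) (A : Matrix (Fin m) (Fin n) ℤ)
    (hrank : (A.map (Int.cast : ℤ → ℝ)).rank = n) (b : Fin m → ℚ) :
    (Set.extremePoints ℝ
        {x : Fin n → ℝ | ∀ i, ∑ j, (A i j : ℝ) * x j ≤ (b i : ℝ)}).Finite ∧
    (Set.extremePoints ℝ
        {x : Fin n → ℝ | ∀ i, ∑ j, (A i j : ℝ) * x j ≤ (b i : ℝ)}).ncard
      ≤ 2 ^ n * min (gammaRow m n A) (gammaCol m n A) ^ n ∧
    2 ^ n * min (gammaRow m n A) (gammaCol m n A) ^ n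
      ≤ (2 * maxNorm m n A) ^ n * min (weakRowSparsity m n A) (weakColSparsity m n A) ^ n :=
  card_vertices_le_sparse_bound_general m n A b
end

section
/- Let A be a k×n real matrix and define detlb(A) = max_{1 ≤ t ≤ k} (Δ_t(A))^{1/t}, where Δ_t(A) is the maximum absolute value of determinants of t×t submatrices of A. Then detlb(A) ≤ ‖A‖_max · √(r(A)) and detlb(A) ≤ ‖A‖₁, where ‖A‖_max = max_{i,j} |A_{ij}|, r(A) is the maximum number of nonzero entries in a row of A, and ‖A‖₁ = max_i ∑_j |A_{ij}| is the maximum ℓ₁-norm of a row of A. -/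
open Matrix
open scoped Classical

/-- `detlb(A) = max_{1 ≤ t ≤ k} (Δ_t(A))^{1/t}`, where `Δ_t(A)` is the maximum absolute
value of determinants of `t×t` submatrices of the `k×n` matrix `A`. -/
noncomputable def detlb (k n : ℕ) (A : Matrix (Fin k) (Fin n) ℝ) : ℝ :=
  sSup {x : ℝ | ∃ t : ℕ, 1 ≤ t ∧ t ≤ k ∧
    ∃ (r : Fin t ↪ Fin k) (c : Fin t ↪ Fin n),
      x = |(A.submatrix r c).det| ^ ((1 : ℝ) / t)}

/-!
By Hadamard's inequality a `t × t` minor of `A` is at most the product of the Euclidean norms of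
its rows. Each such row is a restriction of a row of `A`, so its norm is at most that of the full
row, which is bounded both by the row's `ℓ₁`-norm and by `‖A‖_max · √(r(A))`. A bound `B` on the
row norms thus gives `Δ_t(A) ≤ B ^ t` for every `t`, i.e. `detlb(A) ≤ B`.
-/

open Finset

theorem Matrix.abs_det_le_prod_norm_row {t : ℕ} (M : Matrix (Fin t) (Fin t) ℝ) :
    |M.det| ≤ ∏ i, ‖WithLp.toLp 2 (M i)‖ := by
  have : Fact (Module.finrank ℝ (EuclideanSpace ℝ (Fin t)) = t) := ⟨by simp⟩
  let b := EuclideanSpace.basisFun (Fin t) ℝ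
  have hvol := b.toBasis.orientation.abs_volumeForm_apply_le (fun i => WithLp.toLp 2 (M i))
  rw [b.toBasis.orientation.volumeForm_robust' b, Module.Basis.det_apply] at hvol
  convert hvol using 2
  -- the coordinate matrix of the rows of `M` in the standard basis is `Mᵀ`
  rw [← det_transpose]
  rfl

theorem Matrix.abs_det_le_pow_of_norm_row_le {t : ℕ} {M : Matrix (Fin t) (Fin t) ℝ} {B : ℝ}
    (h : ∀ i, ‖WithLp.toLp 2 (M i)‖ ≤ B) : |M.det| ≤ B ^ t :=
  (abs_det_le_prod_norm_row M).trans <| by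
    simpa using prod_le_prod (s := univ) (fun i _ => norm_nonneg _) fun i _ => h i

theorem EuclideanSpace.norm_toLp_comp_embedding_le {ι κ : Type*} [Fintype ι] [Fintype κ]
    (v : κ → ℝ) (c : ι ↪ κ) : ‖WithLp.toLp 2 (v ∘ c)‖ ≤ ‖WithLp.toLp 2 v‖ := by
  simp only [EuclideanSpace.norm_eq, Real.norm_eq_abs, sq_abs, Function.comp_apply]
  gcongr
  rw [← sum_map _ c (fun j => v j ^ 2)]
  exact sum_le_sum_of_subset_of_nonneg (subset_univ _) fun j _ _ => sq_nonneg _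

theorem EuclideanSpace.norm_toLp_le_sum_abs {ι : Type*} [Fintype ι] (v : ι → ℝ) :
    ‖WithLp.toLp 2 v‖ ≤ ∑ j, |v j| := by
  rw [EuclideanSpace.norm_eq, Real.sqrt_le_left (sum_nonneg fun j _ => abs_nonneg _)]
  simpa only [Real.norm_eq_abs] using sum_sq_le_sq_sum_of_nonneg fun j _ => abs_nonneg (v j)

theorem EuclideanSpace.norm_toLp_le_mul_sqrt_card_support {ι : Type*} [Fintype ι]
    (v : ι → ℝ) {m : ℝ} (hm0 : 0 ≤ m) (hm : ∀ j, |v j| ≤ m) :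
    ‖WithLp.toLp 2 v‖ ≤ m * √(#{j | v j ≠ 0} : ℕ) := by
  rw [EuclideanSpace.norm_eq, ← Real.sqrt_sq hm0, ← Real.sqrt_mul (sq_nonneg _)]
  gcongr
  calc ∑ j, ‖v j‖ ^ 2 = ∑ j with v j ≠ 0, |v j| ^ 2 :=
        (sum_filter_of_ne fun j _ hj => by simpa using hj).symm
    _ ≤ ∑ j with v j ≠ 0, m ^ 2 := by gcongr with j; exact hm j
    _ = m ^ 2 * #{j | v j ≠ 0} := by rw [sum_const, nsmul_eq_mul, mul_comm]

theorem detlb_le_of_norm_row_le {k n : ℕ} {A : Matrix (Fin k) (Fin n) ℝ} {B : ℝ} (hB : 0 ≤ B)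
    (h : ∀ i, ‖WithLp.toLp 2 (A i)‖ ≤ B) : detlb k n A ≤ B := by
  refine Real.sSup_le ?_ hB
  rintro _ ⟨t, ht, -, r, c, rfl⟩
  have hdet : |(A.submatrix r c).det| ≤ B ^ t := abs_det_le_pow_of_norm_row_le fun i =>
    (EuclideanSpace.norm_toLp_comp_embedding_le (A (r i)) c).trans (h (r i))
  rwa [one_div, Real.rpow_inv_le_iff_of_pos (abs_nonneg _) hB (by positivity), Real.rpow_natCast]

/-- For a `k×n` real matrix `A`:
`detlb(A) ≤ ‖A‖_max · √(r(A))` and `detlb(A) ≤ ‖A‖₁`, where `‖A‖_max` is the maximum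
absolute value of an entry, `r(A)` the maximum number of nonzero entries in a row, and
`‖A‖₁` the maximum row `ℓ₁`-norm. -/
theorem detlb_le_bounds (k n : ℕ) (A : Matrix (Fin k) (Fin n) ℝ) :
    detlb k n A ≤ (⨆ i : Fin k, ⨆ j : Fin n, |A i j|) *
      Real.sqrt ((⨆ i : Fin k, (Finset.univ.filter fun j : Fin n => A i j ≠ 0).card : ℕ)) ∧
    detlb k n A ≤ ⨆ i : Fin k, ∑ j, |A i j| := by
  have hmax_nonneg : 0 ≤ ⨆ i : Fin k, ⨆ j : Fin n, |A i j| :=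
    Real.iSup_nonneg fun i => Real.iSup_nonneg fun j => abs_nonneg _
  constructor
  · refine detlb_le_of_norm_row_le (mul_nonneg hmax_nonneg (Real.sqrt_nonneg _)) fun i => ?_
    refine (EuclideanSpace.norm_toLp_le_mul_sqrt_card_support (A i) hmax_nonneg fun j =>
      (le_ciSup (Finite.bddAbove_range fun j => |A i j|) j).trans
        (le_ciSup (Finite.bddAbove_range fun i => ⨆ j, |A i j|) i)).trans ?_
    gcongr
    exact le_ciSup (Finite.bddAbove_range fun i => #{j | A i j ≠ 0}) i
  · refine detlb_le_of_norm_row_le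
      (Real.iSup_nonneg fun i => sum_nonneg fun j _ => abs_nonneg _) fun i => ?_
    exact (EuclideanSpace.norm_toLp_le_sum_abs (A i)).trans
      (le_ciSup (Finite.bddAbove_range fun i => ∑ j, |A i j|) i)
end
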